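/- The bilinear map μ₂((f,u),(g,v)) = ∫₀^{2π}∫₀^{2π} (f·v_y − g·u_y) dx dy is a 2-cocycle on the looped cotangent Virasoro algebra g̃: it is antisymmetric, μ₂((f,u),(g,v)) = −μ₂((g,v),(f,u)), and satisfies μ₂([a,b],c) + μ₂([b,c],a) + μ₂([c,a],b) = 0 for all a, b, c ∈ g̃. (This is the central extension of Kac–Moody type.) -/

import Mathlib

/-!
An element of `g̃` is a pair of elements of the algebra `𝒜` of smooth doubly `2π`-periodic
functions, on which `∂x` and `∂y` act as commuting derivations; the bracket and the density
`f·v_y − g·u_y` of `μ₂` are built from these by ring operations alone. In any commutative algebra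
with two commuting derivations `D₁`, `D₂`, the cyclic sum of the density over brackets is a
divergence `D₁ P + D₂ Q`: this combines the invariance of the pairing `f·u` under the coadjoint
action, the Leibniz rule of `D₂` on the bracket (where `D₁ D₂ = D₂ D₁` enters), and integration
by parts in `y`. On the torus a divergence integrates to zero by the fundamental theorem of
calculus and periodicity.
-/

open Real intervalIntegral
open scoped ContDiff

noncomputable section

/-- Functions on `ℝ²` (representing functions on the 2-torus `S¹ × S¹`). -/
abbrev F2 : Type := ℝ × ℝ → ℂ

/-- `C∞₂π(ℝ²,ℂ)`: smooth functions `ℝ² → ℂ` which are `2π`-periodic in each variable. -/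
def SmoothPer2 (f : F2) : Prop :=
  ContDiff ℝ ∞ f ∧ (∀ p : ℝ × ℝ, f (p.1 + 2 * π, p.2) = f p)
    ∧ (∀ p : ℝ × ℝ, f (p.1, p.2 + 2 * π) = f p)

/-- Partial derivative in the first variable `x`. -/
def pdx (f : F2) : F2 := fun p => deriv (fun t => f (t, p.2)) p.1

/-- Partial derivative in the second variable `y`. -/
def pdy (f : F2) : F2 := fun p => deriv (fun t => f (p.1, t)) p.2

/-- Double integral `∫₀^{2π}∫₀^{2π} f dx dy` over the torus. -/
def integ2 (f : F2) : ℂ := ∫ y in (0:ℝ)..(2 * π), ∫ x in (0:ℝ)..(2 * π), f (x, y)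

/-- Membership in the looped cotangent Virasoro algebra `g̃`: a pair `(f,u)` of
functions in `C∞₂π(ℝ²,ℂ)`, `f` representing the loop of vector fields `f(x,y)·∂/∂x`
and `u` the loop of quadratic differentials `u(x,y)·dx²`. -/
def MemG (a : F2 × F2) : Prop := SmoothPer2 a.1 ∧ SmoothPer2 a.2

/-- The Lie bracket of the looped cotangent Virasoro algebra `g̃ = L(Vect(S¹) ⋉ F₂)`:
`[(f,u),(g,v)] = (f·g_x − f_x·g, f·v_x + 2·f_x·v − g·u_x − 2·g_x·u)`. -/
def gBracket (a b : F2 × F2) : F2 × F2 :=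
  (fun p => a.1 p * pdx b.1 p - pdx a.1 p * b.1 p,
   fun p => a.1 p * pdx b.2 p + 2 * pdx a.1 p * b.2 p
     - b.1 p * pdx a.2 p - 2 * pdx b.1 p * a.2 p)

/-- The Kac–Moody-type 2-cocycle `μ₂((f,u),(g,v)) = ∫₀^{2π}∫₀^{2π} (f·v_y − g·u_y) dx dy`
on the looped cotangent Virasoro algebra `g̃`. -/
def mu2 (a b : F2 × F2) : ℂ := integ2 (fun p => a.1 p * pdy b.2 p - b.1 p * pdy a.2 p)

section CommutingDerivations

variable {R A : Type*} [CommSemiring R] [CommRing A] [Algebra R A]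

def cotangentBracket (D : Derivation R A A) (a b : A × A) : A × A :=
  (a.1 * D b.1 - D a.1 * b.1,
   a.1 * D b.2 + 2 * D a.1 * b.2 - b.1 * D a.2 - 2 * D b.1 * a.2)

def kacMoodyDensity (D : Derivation R A A) (a b : A × A) : A :=
  a.1 * D b.2 - b.1 * D a.2

theorem kacMoodyDensity_swap (D : Derivation R A A) (a b : A × A) :
    kacMoodyDensity D b a = -kacMoodyDensity D a b := by
  simp only [kacMoodyDensity]; ring

theorem exists_cyclic_sum_kacMoodyDensity_eq_divergence (D₁ D₂ : Derivation R A A)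
    (hcomm : ∀ x, D₁ (D₂ x) = D₂ (D₁ x)) (a b c : A × A) :
    ∃ P Q : A, kacMoodyDensity D₂ (cotangentBracket D₁ a b) c
      + kacMoodyDensity D₂ (cotangentBracket D₁ b c) a
      + kacMoodyDensity D₂ (cotangentBracket D₁ c a) b = D₁ P + D₂ Q := by
  obtain ⟨f, u⟩ := a
  obtain ⟨g, v⟩ := b
  obtain ⟨h, w⟩ := c
  -- `P` and `Q` collect what integrating the cyclic sum by parts in `x` and in `y` moves out.
  refine ⟨f * g * D₂ w - f * h * D₂ v + 2 * g * D₂ f * w + g * h * D₂ u - 2 * h * D₂ f * v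
      + 2 * h * D₂ g * u,
    f * h * D₁ v + 2 * f * D₁ h * v - 2 * f * D₁ g * w - f * g * D₁ w - 2 * g * D₁ h * u
      - g * h * D₁ u, ?_⟩
  have h₁ : D₁ (2 : A) = 0 := by exact_mod_cast D₁.map_natCast 2
  have h₂ : D₂ (2 : A) = 0 := by exact_mod_cast D₂.map_natCast 2
  simp only [kacMoodyDensity, cotangentBracket, Derivation.leibniz, map_add, map_sub, smul_eq_mul,
    h₁, h₂, hcomm]
  ring

end CommutingDerivations

section PartialDerivatives

variable {f g : F2} {p : ℝ × ℝ}

theorem hasDerivAt_pdx (hf : DifferentiableAt ℝ f p) :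
    HasDerivAt (fun t => f (t, p.2)) (pdx f p) p.1 :=
  (hf.comp p.1 (by fun_prop : DifferentiableAt ℝ (fun t : ℝ => (t, p.2)) p.1)).hasDerivAt

theorem hasDerivAt_pdy (hf : DifferentiableAt ℝ f p) :
    HasDerivAt (fun t => f (p.1, t)) (pdy f p) p.2 :=
  (hf.comp p.2 (by fun_prop : DifferentiableAt ℝ (fun t : ℝ => (p.1, t)) p.2)).hasDerivAt

theorem pdx_eq_fderiv (hf : DifferentiableAt ℝ f p) : pdx f p = fderiv ℝ f p (1, 0) := by
  have hline : HasDerivAt (fun t : ℝ => (t, p.2)) ((1 : ℝ), (0 : ℝ)) p.1 :=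
    (hasDerivAt_id p.1).prodMk (hasDerivAt_const _ _)
  exact (hf.hasFDerivAt.comp_hasDerivAt p.1 hline).deriv

theorem pdy_eq_fderiv (hf : DifferentiableAt ℝ f p) : pdy f p = fderiv ℝ f p (0, 1) := by
  have hline : HasDerivAt (fun t : ℝ => (p.1, t)) ((0 : ℝ), (1 : ℝ)) p.2 :=
    (hasDerivAt_const _ _).prodMk (hasDerivAt_id p.2)
  exact (hf.hasFDerivAt.comp_hasDerivAt p.2 hline).deriv

theorem pdx_add (hf : DifferentiableAt ℝ f p) (hg : DifferentiableAt ℝ g p) :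
    pdx (f + g) p = pdx f p + pdx g p :=
  ((hasDerivAt_pdx hf).add (hasDerivAt_pdx hg)).deriv

theorem pdy_add (hf : DifferentiableAt ℝ f p) (hg : DifferentiableAt ℝ g p) :
    pdy (f + g) p = pdy f p + pdy g p :=
  ((hasDerivAt_pdy hf).add (hasDerivAt_pdy hg)).deriv

theorem pdx_smul (c : ℂ) (hf : DifferentiableAt ℝ f p) : pdx (c • f) p = c * pdx f p :=
  ((hasDerivAt_pdx hf).const_mul c).deriv

theorem pdy_smul (c : ℂ) (hf : DifferentiableAt ℝ f p) : pdy (c • f) p = c * pdy f p :=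
  ((hasDerivAt_pdy hf).const_mul c).deriv

theorem pdx_mul (hf : DifferentiableAt ℝ f p) (hg : DifferentiableAt ℝ g p) :
    pdx (f * g) p = f p * pdx g p + g p * pdx f p :=
  ((hasDerivAt_pdx hf).mul (hasDerivAt_pdx hg)).deriv.trans (by ring)

theorem pdy_mul (hf : DifferentiableAt ℝ f p) (hg : DifferentiableAt ℝ g p) :
    pdy (f * g) p = f p * pdy g p + g p * pdy f p :=
  ((hasDerivAt_pdy hf).mul (hasDerivAt_pdy hg)).deriv.trans (by ring)

theorem ContDiff.pdx (hf : ContDiff ℝ ∞ f) : ContDiff ℝ ∞ (_root_.pdx f) := by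
  rw [show _root_.pdx f = fun q => fderiv ℝ f q (1, 0) from
    funext fun q => pdx_eq_fderiv (hf.differentiable (by simp) q)]
  exact (hf.fderiv_right le_rfl).clm_apply contDiff_const

theorem ContDiff.pdy (hf : ContDiff ℝ ∞ f) : ContDiff ℝ ∞ (_root_.pdy f) := by
  rw [show _root_.pdy f = fun q => fderiv ℝ f q (0, 1) from
    funext fun q => pdy_eq_fderiv (hf.differentiable (by simp) q)]
  exact (hf.fderiv_right le_rfl).clm_apply contDiff_const

theorem pdx_pdy_comm (hf : ContDiff ℝ 2 f) (p : ℝ × ℝ) :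
    pdx (pdy f) p = pdy (pdx f) p := by
  have hdf : Differentiable ℝ f := hf.differentiable (by simp)
  have hd2f : DifferentiableAt ℝ (fderiv ℝ f) p :=
    (hf.fderiv_right (m := 1) le_rfl).differentiable one_ne_zero p
  rw [show pdx f = fun q => fderiv ℝ f q (1, 0) from funext fun q => pdx_eq_fderiv (hdf q),
    show pdy f = fun q => fderiv ℝ f q (0, 1) from funext fun q => pdy_eq_fderiv (hdf q),
    pdy_eq_fderiv (hd2f.clm_apply (differentiableAt_const _)),
    pdx_eq_fderiv (hd2f.clm_apply (differentiableAt_const _)),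
    fderiv_clm_apply hd2f (differentiableAt_const _),
    fderiv_clm_apply hd2f (differentiableAt_const _)]
  simpa using (hf.contDiffAt.isSymmSndFDerivAt (by simp) (1, 0) (0, 1))

end PartialDerivatives

section SmoothPeriodic

variable {f g : F2}

theorem SmoothPer2.differentiable (hf : SmoothPer2 f) : Differentiable ℝ f :=
  hf.1.differentiable (by simp)

theorem SmoothPer2.mul (hf : SmoothPer2 f) (hg : SmoothPer2 g) : SmoothPer2 (f * g) :=
  ⟨hf.1.mul hg.1, fun p => by simp [hf.2.1 p, hg.2.1 p], fun p => by simp [hf.2.2 p, hg.2.2 p]⟩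

theorem SmoothPer2.add (hf : SmoothPer2 f) (hg : SmoothPer2 g) : SmoothPer2 (f + g) :=
  ⟨hf.1.add hg.1, fun p => by simp [hf.2.1 p, hg.2.1 p], fun p => by simp [hf.2.2 p, hg.2.2 p]⟩

theorem smoothPer2_const (c : ℂ) : SmoothPer2 (fun _ => c) :=
  ⟨contDiff_const, fun _ => rfl, fun _ => rfl⟩

theorem SmoothPer2.pdx (hf : SmoothPer2 f) : SmoothPer2 (pdx f) := by
  refine ⟨hf.1.pdx, fun p => ?_, fun p => ?_⟩
  · rw [_root_.pdx, _root_.pdx, ← deriv_comp_add_const]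
    exact congrArg (deriv · p.1) (funext fun t => hf.2.1 (t, p.2))
  · exact congrArg (deriv · p.1) (funext fun t => hf.2.2 (t, p.2))

theorem SmoothPer2.pdy (hf : SmoothPer2 f) : SmoothPer2 (pdy f) := by
  refine ⟨hf.1.pdy, fun p => ?_, fun p => ?_⟩
  · exact congrArg (deriv · p.2) (funext fun t => hf.2.1 (p.1, t))
  · rw [_root_.pdy, _root_.pdy, ← deriv_comp_add_const]
    exact congrArg (deriv · p.2) (funext fun t => hf.2.2 (p.1, t))

end SmoothPeriodic

def smoothPer2Subalgebra : Subalgebra ℂ F2 where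
  carrier := {f | SmoothPer2 f}
  mul_mem' := SmoothPer2.mul
  add_mem' := SmoothPer2.add
  algebraMap_mem' := smoothPer2_const

local notation "𝒜" => smoothPer2Subalgebra

def derivX : Derivation ℂ 𝒜 𝒜 :=
  Derivation.mk'
    { toFun := fun F => ⟨pdx F, F.2.pdx⟩
      map_add' := fun F G =>
        Subtype.ext <| funext fun _ => pdx_add (F.2.differentiable _) (G.2.differentiable _)
      map_smul' := fun c F => Subtype.ext <| funext fun _ => pdx_smul c (F.2.differentiable _) }
    fun F G => Subtype.ext <| funext fun _ => pdx_mul (F.2.differentiable _) (G.2.differentiable _)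

def derivY : Derivation ℂ 𝒜 𝒜 :=
  Derivation.mk'
    { toFun := fun F => ⟨pdy F, F.2.pdy⟩
      map_add' := fun F G =>
        Subtype.ext <| funext fun _ => pdy_add (F.2.differentiable _) (G.2.differentiable _)
      map_smul' := fun c F => Subtype.ext <| funext fun _ => pdy_smul c (F.2.differentiable _) }
    fun F G => Subtype.ext <| funext fun _ => pdy_mul (F.2.differentiable _) (G.2.differentiable _)

theorem derivX_derivY_comm (F : 𝒜) : derivX (derivY F) = derivY (derivX F) :=
  Subtype.ext <| funext <| pdx_pdy_comm (F.2.1.of_le (by norm_cast))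

section TorusIntegral

open MeasureTheory

theorem integ2_add {k₁ k₂ : F2} (h₁ : Continuous k₁) (h₂ : Continuous k₂) :
    integ2 (k₁ + k₂) = integ2 k₁ + integ2 k₂ := by
  have hinner : ∀ k : F2, Continuous k → Continuous fun y => ∫ x in (0:ℝ)..(2 * π), k (x, y) :=
    fun k hk => continuous_parametric_intervalIntegral_of_continuous' (f := fun y x => k (x, y))
      (hk.comp (continuous_snd.prodMk continuous_fst)) _ _
  rw [integ2, integ2, integ2, ← integral_add ((hinner _ h₁).intervalIntegrable _ _)
    ((hinner _ h₂).intervalIntegrable _ _)]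
  congr 1 with y
  exact integral_add ((h₁.comp (by fun_prop)).intervalIntegrable _ _)
    ((h₂.comp (by fun_prop)).intervalIntegrable _ _)

theorem integ2_smul (c : ℂ) (k : F2) : integ2 (c • k) = c * integ2 k := by
  simp only [integ2, Pi.smul_apply, smul_eq_mul, intervalIntegral.integral_const_mul]

theorem integ2_eq_integral_integral_swap {k : F2} (hk : Continuous k) :
    integ2 k = ∫ x in (0:ℝ)..(2 * π), ∫ y in (0:ℝ)..(2 * π), k (x, y) := by
  have h2π : (0:ℝ) ≤ 2 * π := by positivity
  have hint : Integrable (Function.uncurry fun y x => k (x, y))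
      ((volume.restrict (Set.Ioc 0 (2 * π))).prod (volume.restrict (Set.Ioc 0 (2 * π)))) := by
    rw [Measure.prod_restrict, ← Measure.volume_eq_prod]
    exact ((hk.comp continuous_swap).continuousOn.integrableOn_compact
      (isCompact_Icc.prod isCompact_Icc)).mono_set
      (Set.prod_mono Set.Ioc_subset_Icc_self Set.Ioc_subset_Icc_self)
  simp only [integ2, integral_of_le h2π]
  exact integral_integral_swap hint

theorem integral_pdx_eq_zero {A : F2} (hA : SmoothPer2 A) (y : ℝ) :
    ∫ x in (0:ℝ)..(2 * π), pdx A (x, y) = 0 := by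
  have hline : Differentiable ℝ fun t => A (t, y) := hA.differentiable.comp (by fun_prop)
  have hcont : Continuous fun x => pdx A (x, y) :=
    hA.pdx.1.continuous.comp (continuous_id.prodMk continuous_const)
  rw [show (fun x => pdx A (x, y)) = deriv fun t => A (t, y) from rfl,
    integral_deriv_eq_sub (fun x _ => hline x) (hcont.intervalIntegrable _ _)]
  simpa [sub_eq_zero] using hA.2.1 (0, y)

theorem integral_pdy_eq_zero {A : F2} (hA : SmoothPer2 A) (x : ℝ) :
    ∫ y in (0:ℝ)..(2 * π), pdy A (x, y) = 0 := by
  have hline : Differentiable ℝ fun t => A (x, t) := hA.differentiable.comp (by fun_prop)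
  have hcont : Continuous fun y => pdy A (x, y) :=
    hA.pdy.1.continuous.comp (continuous_const.prodMk continuous_id)
  rw [show (fun y => pdy A (x, y)) = deriv fun t => A (x, t) from rfl,
    integral_deriv_eq_sub (fun y _ => hline y) (hcont.intervalIntegrable _ _)]
  simpa [sub_eq_zero] using hA.2.2 (x, 0)

theorem integ2_pdx_eq_zero {A : F2} (hA : SmoothPer2 A) : integ2 (pdx A) = 0 := by
  simp only [integ2, integral_pdx_eq_zero hA, intervalIntegral.integral_zero]

theorem integ2_pdy_eq_zero {A : F2} (hA : SmoothPer2 A) : integ2 (pdy A) = 0 := by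
  simp only [integ2_eq_integral_integral_swap hA.pdy.1.continuous, integral_pdy_eq_zero hA,
    intervalIntegral.integral_zero]

def integ2ₗ : 𝒜 →ₗ[ℂ] ℂ where
  toFun F := integ2 F
  map_add' F G := integ2_add F.2.1.continuous G.2.1.continuous
  map_smul' c F := integ2_smul c F

theorem integ2ₗ_derivX (F : 𝒜) : integ2ₗ (derivX F) = 0 :=
  integ2_pdx_eq_zero F.2

theorem integ2ₗ_derivY (F : 𝒜) : integ2ₗ (derivY F) = 0 :=
  integ2_pdy_eq_zero F.2

end TorusIntegral

def coePair : 𝒜 × 𝒜 → F2 × F2 := Prod.map (↑) (↑)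

instance : CanLift (F2 × F2) (𝒜 × 𝒜) coePair MemG :=
  ⟨fun a ha => ⟨(⟨a.1, ha.1⟩, ⟨a.2, ha.2⟩), rfl⟩⟩

theorem gBracket_coePair (a b : 𝒜 × 𝒜) :
    gBracket (coePair a) (coePair b) = coePair (cotangentBracket derivX a b) := rfl

theorem mu2_coePair (a b : 𝒜 × 𝒜) :
    mu2 (coePair a) (coePair b) = integ2ₗ (kacMoodyDensity derivY a b) := rfl

theorem mu2_is_two_cocycle :
    (∀ a b : F2 × F2, MemG a → MemG b → mu2 a b = - mu2 b a) ∧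
    (∀ a b d : F2 × F2, MemG a → MemG b → MemG d →
      mu2 (gBracket a b) d + mu2 (gBracket b d) a + mu2 (gBracket d a) b = 0) := by
  constructor
  · intro a b ha hb
    lift a to 𝒜 × 𝒜 using ha
    lift b to 𝒜 × 𝒜 using hb
    rw [mu2_coePair, mu2_coePair, kacMoodyDensity_swap, map_neg]
  · intro a b d ha hb hd
    lift a to 𝒜 × 𝒜 using ha
    lift b to 𝒜 × 𝒜 using hb
    lift d to 𝒜 × 𝒜 using hd
    obtain ⟨P, Q, hdiv⟩ :=
      exists_cyclic_sum_kacMoodyDensity_eq_divergence derivX derivY derivX_derivY_comm a b d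
    calc _ = integ2ₗ (derivX P + derivY Q) := by
          simp only [gBracket_coePair, mu2_coePair, ← map_add, hdiv]
      _ = 0 := by rw [map_add, integ2ₗ_derivX, integ2ₗ_derivY, add_zero]
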